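/- arXiv:1401.8108 — 6 statements merged into one kernel-verified Lean document; each statement's English description precedes it below -/
import Mathlib

section
/- If U and V are ultrafilters on ω and U ≥_T V, then there is a monotone cofinal map from (U, ⊇) to (V, ⊇) witnessing this. -/
open Set

universe u v w

def CofinalSet {α : Type u} [PartialOrder α] (S : Set α) : Prop :=
  ∀ a : α, ∃ s ∈ S, a ≤ s

def CofinalMap {α : Type u} {β : Type v} [PartialOrder α] [PartialOrder β] (f : α → β) : Prop :=
  ∀ S : Set α, CofinalSet S → CofinalSet (f '' S)

def TukeyLE (α : Type u) (β : Type v) [PartialOrder α] [PartialOrder β] : Prop :=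
  ∃ f : β → α, CofinalMap f

def TukeyEquiv (α : Type u) (β : Type v) [PartialOrder α] [PartialOrder β] : Prop :=
  TukeyLE α β ∧ TukeyLE β α

def UnboundedSet {α : Type u} [PartialOrder α] (S : Set α) : Prop :=
  ∀ a : α, ∃ s ∈ S, ¬ s ≤ a

def UnboundedMap {α : Type u} {β : Type v} [PartialOrder α] [PartialOrder β] (g : α → β) : Prop :=
  ∀ S : Set α, UnboundedSet S → UnboundedSet (g '' S)

def UltOrd {α : Type u} (U : Ultrafilter α) : Type u := {X : Set α // X ∈ U}

instance {α : Type u} (U : Ultrafilter α) : PartialOrder (UltOrd U) where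
  le A B := B.1 ⊆ A.1
  le_refl _ := subset_rfl
  le_trans _ _ _ h1 h2 := Set.Subset.trans h2 h1
  le_antisymm _ _ h1 h2 := Subtype.ext (subset_antisymm h2 h1)

def Nonprincipal {α : Type u} (U : Ultrafilter α) : Prop := ∀ a : α, U ≠ pure a

/-- Convergence in the Cantor-space topology on `𝒫(ω)`. -/
def Converges (A : ℕ → Set ℕ) (L : Set ℕ) : Prop :=
  ∀ m : ℕ, ∃ k : ℕ, ∀ n ≥ k, ∀ i < m, (i ∈ A n ↔ i ∈ L)

def IsPPoint (U : Ultrafilter ℕ) : Prop :=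
  ∀ A : ℕ → Set ℕ, (∀ n, A n ∈ U) → ∃ X : Set ℕ, X ∈ U ∧ ∀ n, (X \ A n).Finite
/-- Tukey reducibility between ultrafilters is always witnessed by a monotone cofinal map. -/
theorem exists_monotone_cofinal_map (U V : Ultrafilter ℕ)
    (h : TukeyLE (UltOrd V) (UltOrd U)) :
    ∃ f : UltOrd U → UltOrd V, Monotone f ∧ CofinalMap f := by
  obtain ⟨f, hf⟩ := h
  have key : ∀ B : UltOrd V, ∃ A : UltOrd U, ∀ X : UltOrd U, X.1 ⊆ A.1 → (f X).1 ⊆ B.1 := by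
    intro B
    by_contra hc
    push_neg at hc
    have hS : CofinalSet {X : UltOrd U | ¬ (f X).1 ⊆ B.1} := by
      intro A
      obtain ⟨X, hX1, hX2⟩ := hc A
      exact ⟨X, hX2, hX1⟩
    obtain ⟨C, hC, hBC⟩ := hf _ hS B
    obtain ⟨X, hXS, rfl⟩ := hC
    exact hXS hBC
  choose A hA using key
  refine ⟨fun X => ⟨(⋃ Y ∈ {Y : UltOrd U | Y.1 ⊆ X.1}, (f Y).1), ?_⟩, ?_, ?_⟩
  · exact V.toFilter.mem_of_superset (f X).2
      (Set.subset_biUnion_of_mem (u := fun Y => (f Y).1) (subset_rfl : X.1 ⊆ X.1))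
  · intro X Y hXY
    exact Set.biUnion_subset_biUnion_left (fun Z (hZ : Z.1 ⊆ Y.1) => hZ.trans hXY)
  · intro S hS B
    obtain ⟨X, hXS, hXA⟩ := hS (A B)
    refine ⟨_, ⟨X, hXS, rfl⟩, ?_⟩
    apply Set.iUnion₂_subset
    intro Z hZ
    exact hA B Z (hZ.trans hXA)
end

section
/- An ultrafilter U on ω is Tukey equivalent to ([𝔠]^{<ω}, ⊆) (where 𝔠 is the continuum) if and only if there exists a subset X ⊆ U of cardinality 𝔠 such that no infinite subset of X has intersection belonging to U. -/
open Set

universe u v w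

section Aux

variable (U : Ultrafilter ℕ)

lemma mk_set_nat : Cardinal.mk (Set ℕ) = Cardinal.continuum := by
  simp [Cardinal.mk_set, Cardinal.mk_nat, Cardinal.two_power_aleph0]

lemma ultOrd_le_iff (A B : UltOrd U) : A ≤ B ↔ B.1 ⊆ A.1 := Iff.rfl

/-- Easy direction: `UltOrd U ≤_T Finset (Set ℕ)`. -/
lemma tukeyLE_ultOrd_finset : TukeyLE (UltOrd U) (Finset (Set ℕ)) := by
  refine ⟨fun s => ⟨⋂ A ∈ {A ∈ (s : Set (Set ℕ)) | A ∈ U}, A,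
    (Filter.biInter_mem (s.finite_toSet.subset (Set.sep_subset _ _))).mpr
      (fun A hA => hA.2)⟩, ?_⟩
  intro S hS a
  obtain ⟨s, hsS, hs⟩ := hS {a.1}
  refine ⟨_, Set.mem_image_of_mem _ hsS, ?_⟩
  show (⋂ A ∈ {A ∈ (s : Set (Set ℕ)) | A ∈ U}, A) ⊆ a.1
  exact Set.biInter_subset_of_mem
    ⟨Finset.mem_coe.mpr ((Finset.le_iff_subset.mp hs) (Finset.mem_singleton_self _)), a.2⟩

/-- Hard direction of ⇐ : from a strongly unbounded set of size continuum. -/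
lemma tukeyLE_finset_ultOrd (X : Set (Set ℕ)) (hXU : ∀ A ∈ X, A ∈ U)
    (hXc : Cardinal.mk ↥X = Cardinal.continuum)
    (hXub : ∀ Y ⊆ X, Y.Infinite → ⋂₀ Y ∉ U) :
    TukeyLE (Finset (Set ℕ)) (UltOrd U) := by
  obtain ⟨e⟩ : Nonempty (Set ℕ ≃ ↥X) := Cardinal.eq.mp (by rw [hXc, mk_set_nat])
  have hF : ∀ B : UltOrd U, {r : Set ℕ | B.1 ⊆ (e r : Set ℕ)}.Finite := by
    intro B
    by_contra hinf
    refine hXub ((fun r => ((e r : ↥X) : Set ℕ)) '' {r : Set ℕ | B.1 ⊆ (e r : Set ℕ)})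
      ?_ ?_ ?_
    · rintro A ⟨r, _, rfl⟩; exact (e r).2
    · exact Set.Infinite.image
        (fun r _ r' _ h => e.injective (Subtype.ext h)) hinf
    · refine Filter.mem_of_superset B.2 (Set.subset_sInter ?_)
      rintro A ⟨r, hr, rfl⟩; exact hr
  refine ⟨fun B => (hF B).toFinset, ?_⟩
  intro S hS t
  have hB₀ : (⋂ r ∈ (t : Set (Set ℕ)), ((e r : ↥X) : Set ℕ)) ∈ U :=
    (Filter.biInter_mem t.finite_toSet).mpr (fun r _ => hXU _ (e r).2)
  obtain ⟨s, hsS, hs⟩ := hS ⟨_, hB₀⟩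
  refine ⟨_, Set.mem_image_of_mem _ hsS, ?_⟩
  rw [Finset.le_iff_subset]
  intro r hr
  rw [Set.Finite.mem_toFinset]
  exact Set.Subset.trans hs (Set.biInter_subset_of_mem (Finset.mem_coe.mpr hr))

/-- Hard direction of ⇒ : extract a strongly unbounded set. -/
lemma exists_strongly_unbounded (h : TukeyLE (Finset (Set ℕ)) (UltOrd U)) :
    ∃ X : Set (Set ℕ), (∀ A ∈ X, A ∈ U) ∧ Cardinal.mk ↥X = Cardinal.continuum ∧
      ∀ Y ⊆ X, Y.Infinite → ⋂₀ Y ∉ U := by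
  obtain ⟨f, hf⟩ := h
  have key : ∀ r : Set ℕ, ∃ A : UltOrd U, ∀ B : UltOrd U, A ≤ B → r ∈ f B := by
    intro r
    by_contra hc
    push_neg at hc
    have hcof : CofinalSet {B : UltOrd U | r ∉ f B} := by
      intro A
      obtain ⟨B, hAB, hr⟩ := hc A
      exact ⟨B, hr, hAB⟩
    obtain ⟨t, ⟨B, hB, rfl⟩, hrt⟩ := hf _ hcof {r}
    exact hB ((Finset.le_iff_subset.mp hrt) (Finset.mem_singleton_self r))
  choose g hg using key
  set h : Set ℕ → Set ℕ := fun r => (g r).1 with hh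
  have hfin : ∀ B : UltOrd U, {r : Set ℕ | B.1 ⊆ h r}.Finite := by
    intro B
    exact (f B).finite_toSet.subset (fun r hr => hg r B hr)
  refine ⟨Set.range h, ?_, ?_, ?_⟩
  · rintro A ⟨r, rfl⟩; exact (g r).2
  · -- cardinality
    refine le_antisymm (mk_set_nat ▸ Cardinal.mk_range_le) ?_
    have hle : Cardinal.mk (Set ℕ) ≤ Cardinal.mk ↥(Set.range h) * Cardinal.aleph0 := by
      refine Cardinal.mk_le_mk_mul_of_mk_preimage_le
        (fun r => (⟨h r, Set.mem_range_self r⟩ : ↥(Set.range h))) ?_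
      intro b
      have hsub : (fun r => (⟨h r, Set.mem_range_self r⟩ : ↥(Set.range h))) ⁻¹' {b}
          ⊆ {r : Set ℕ | (b : Set ℕ) ⊆ h r} := by
        intro r hr
        have : h r = (b : Set ℕ) := congrArg Subtype.val hr
        simp [Set.mem_setOf_eq, this]
      obtain ⟨r₀, hr₀⟩ := b.2
      have hbU : (b : Set ℕ) ∈ U := hr₀ ▸ (g r₀).2
      have : ((fun r => (⟨h r, Set.mem_range_self r⟩ : ↥(Set.range h))) ⁻¹' {b}).Finite :=
        (hfin ⟨(b : Set ℕ), hbU⟩).subset hsub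
      exact this.countable.le_aleph0
    by_contra hlt
    push_neg at hlt
    have h2 : Cardinal.mk ↥(Set.range h) * Cardinal.aleph0 < Cardinal.continuum :=
      Cardinal.mul_lt_of_lt Cardinal.aleph0_le_continuum hlt Cardinal.aleph0_lt_continuum
    exact absurd (mk_set_nat ▸ hle) (not_le.mpr h2)
  · intro Y hYX hYinf hmem
    have hsub : Y ⊆ h '' {r : Set ℕ | (⟨⋂₀ Y, hmem⟩ : UltOrd U).1 ⊆ h r} := by
      intro A hA
      obtain ⟨r, rfl⟩ := hYX hA
      exact ⟨r, Set.sInter_subset_of_mem hA, rfl⟩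
    exact hYinf (((hfin ⟨⋂₀ Y, hmem⟩).image h).subset hsub)

end Aux

/-- Combinatorial characterization of having the maximum Tukey type `[𝔠]^{<ω}`. -/
theorem tukey_max_iff (U : Ultrafilter ℕ) :
    TukeyEquiv (UltOrd U) (Finset (Set ℕ)) ↔
      ∃ X : Set (Set ℕ), (∀ A ∈ X, A ∈ U) ∧ Cardinal.mk ↥X = Cardinal.continuum ∧
        ∀ Y ⊆ X, Y.Infinite → ⋂₀ Y ∉ U := by
  constructor
  · rintro ⟨-, h⟩
    exact exists_strongly_unbounded U h
  · rintro ⟨X, hXU, hXc, hXub⟩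
    exact ⟨tukeyLE_ultOrd_finset U, tukeyLE_finset_ultOrd U X hXU hXc hXub⟩
end

section
/- Every p-point ultrafilter on ω is basic: for every sequence (Uₙ) of elements of U converging (in the Cantor-space topology on P(ω)) to an element U of U, there is a subsequence (U_{n_k}) with ⋂_k U_{n_k} ∈ U. -/
open Set

universe u v w

/-- Every p-point is basic. -/
theorem ppoint_is_basic (U : Ultrafilter ℕ) (h0 : Nonprincipal U) (hp : IsPPoint U)
    (A : ℕ → Set ℕ) (hA : ∀ n, A n ∈ U) (L : Set ℕ) (hL : L ∈ U) (hc : Converges A L) :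
    ∃ φ : ℕ → ℕ, StrictMono φ ∧ (⋂ k, A (φ k)) ∈ U := by
  classical
  -- U extends the cofinite filter
  have hcof : (U : Filter ℕ) ≤ Filter.cofinite := by
    rcases U.le_cofinite_or_eq_pure with h | ⟨a, ha⟩
    · exact h
    · exact absurd ha (h0 a)
  -- pseudo-intersection
  obtain ⟨X₀, hX₀, hfin⟩ := hp A hA
  set X : Set ℕ := X₀ ∩ L with hXdef
  have hXU : X ∈ U := U.inter_mem hX₀ hL
  have hXL : X ⊆ L := inter_subset_right
  have hXfin : ∀ n, (X \ A n).Finite := fun n =>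
    (hfin n).subset (fun i hi => ⟨hi.1.1, hi.2⟩)
  -- escape bounds
  have hkex : ∀ n, ∃ c : ℕ, ∀ i ∈ X \ A n, i < c := by
    intro n
    obtain ⟨b, hb⟩ := (hXfin n).bddAbove
    exact ⟨b + 1, fun i hi => Nat.lt_succ_of_le (hb hi)⟩
  choose k hk using hkex
  have hkey : ∀ n, ∀ i ∈ X, k n ≤ i → i ∈ A n := by
    intro n i hiX hle
    by_contra hnot
    exact absurd (hk n i ⟨hiX, hnot⟩) (not_lt.2 hle)
  by_cases hbd : ∃ c : ℕ, ∀ N : ℕ, ∃ n, N ≤ n ∧ k n < c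
  · -- bounded case: pick a subsequence with k (φ j) < c
    obtain ⟨c, hc'⟩ := hbd
    have step : ∀ p : ℕ, ∃ n, p < n ∧ k n < c := by
      intro p
      obtain ⟨n, hn1, hn2⟩ := hc' (p + 1)
      exact ⟨n, hn1, hn2⟩
    let φ : ℕ → ℕ := fun j => Nat.rec (Classical.choose (hc' 0)) (fun _ p => Classical.choose (step p)) j
    have hφs : ∀ j, φ j < φ (j + 1) := fun j => (Classical.choose_spec (step (φ j))).1
    have hφk : ∀ j, k (φ j) < c := by
      intro j
      cases j with
      | zero => exact (Classical.choose_spec (hc' 0)).2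
      | succ j => exact (Classical.choose_spec (step (φ j))).2
    refine ⟨φ, strictMono_nat_of_lt_succ hφs, ?_⟩
    have hsub : X ∩ {i | c ≤ i} ⊆ ⋂ j, A (φ j) := by
      intro i ⟨hiX, hic⟩
      exact mem_iInter.2 fun j => hkey (φ j) i hiX (le_trans (le_of_lt (hφk j)) hic)
    refine Filter.mem_of_superset (U.inter_mem hXU ?_) hsub
    have : {i : ℕ | c ≤ i} ∈ Filter.cofinite := by
      simp only [Filter.mem_cofinite]
      have : {i : ℕ | c ≤ i}ᶜ = {i | i < c} := by ext i; simp [not_le]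
      rw [this]
      exact (Set.finite_Iio c)
    exact hcof this
  · -- unbounded case: k n → ∞
    push_neg at hbd
    have htend : ∀ c : ℕ, ∃ N : ℕ, ∀ n, N ≤ n → c ≤ k n := by
      intro c
      obtain ⟨N, hN⟩ := hbd c
      exact ⟨N, fun n hn => hN n hn⟩
    -- recursive construction of φ and m
    let step : ℕ × ℕ → ℕ × ℕ := fun q =>
      (max (Classical.choose (hc (max (q.2 + 1) (k q.1)))) (q.1 + 1),
       max (q.2 + 1) (k q.1))
    let p : ℕ → ℕ × ℕ := fun j => Nat.rec ((0 : ℕ), (0 : ℕ)) (fun _ q => step q) j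
    let φ : ℕ → ℕ := fun j => (p j).1
    let m : ℕ → ℕ := fun j => (p j).2
    have hm0 : m 0 = 0 := rfl
    have hmsucc : ∀ j, m (j + 1) = max (m j + 1) (k (φ j)) := fun j => rfl
    have hφsucc : ∀ j, φ (j + 1) = max (Classical.choose (hc (m (j + 1)))) (φ j + 1) := fun j => rfl
    have hφmono : StrictMono φ := by
      apply strictMono_nat_of_lt_succ
      intro j
      rw [hφsucc j]
      exact lt_of_lt_of_le (Nat.lt_succ_self _) (le_max_right _ _)
    have hmmono : ∀ j j', j ≤ j' → m j ≤ m j' := by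
      intro j j' h
      induction h with
      | refl => exact le_rfl
      | @step b h ih =>
        refine le_trans ih ?_
        rw [hmsucc b]
        exact le_trans (Nat.le_succ _) (le_max_left _ _)
    -- agreement of A (φ (j+1)) with L below m (j+1)
    have hagree : ∀ j, ∀ i < m (j + 1), (i ∈ A (φ (j + 1)) ↔ i ∈ L) := by
      intro j i hi
      have hK := Classical.choose_spec (hc (m (j + 1)))
      apply hK (φ (j + 1)) _ i hi
      rw [hφsucc j]
      exact le_max_left _ _
    have hkm : ∀ j, k (φ j) ≤ m (j + 1) := by
      intro j; rw [hmsucc]; exact le_max_right _ _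
    -- bad sets lie in disjoint intervals
    have hbad : ∀ j, X \ A (φ j) ⊆ Ico (m j) (m (j + 1)) := by
      intro j i hi
      constructor
      · cases j with
        | zero => rw [hm0]; exact Nat.zero_le _
        | succ j' =>
          by_contra hlt
          push_neg at hlt
          exact hi.2 ((hagree j' i hlt).2 (hXL hi.1))
      · exact lt_of_lt_of_le (hk (φ j) i hi) (hkm j)
    set E : Set ℕ := ⋃ j, Ico (m (2 * j)) (m (2 * j + 1)) with hE
    set O : Set ℕ := ⋃ j, Ico (m (2 * j + 1)) (m (2 * j + 2)) with hO
    have hEO : E ∩ O = ∅ := by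
      ext i
      simp only [mem_inter_iff, mem_empty_iff_false, iff_false, hE, hO, mem_iUnion, mem_Ico]
      rintro ⟨⟨j, hj1, hj2⟩, ⟨j', hj1', hj2'⟩⟩
      rcases le_or_gt j j' with h | h
      · have : m (2 * j + 1) ≤ m (2 * j' + 1) := hmmono (2 * j + 1) (2 * j' + 1) (by omega)
        omega
      · have : m (2 * j' + 2) ≤ m (2 * j) := hmmono (2 * j' + 2) (2 * j) (by omega)
        omega
    have heven : X \ E ⊆ ⋂ j, A (φ (2 * j)) := by
      intro i hi
      refine mem_iInter.2 fun j => ?_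
      by_contra hnot
      exact hi.2 (mem_iUnion.2 ⟨j, hbad (2 * j) ⟨hi.1, hnot⟩⟩)
    have hodd : X \ O ⊆ ⋂ j, A (φ (2 * j + 1)) := by
      intro i hi
      refine mem_iInter.2 fun j => ?_
      by_contra hnot
      have := hbad (2 * j + 1) ⟨hi.1, hnot⟩
      exact hi.2 (mem_iUnion.2 ⟨j, this⟩)
    by_cases hEU : E ∈ U
    · -- then O ∉ U, use odd subsequence
      have hOc : Oᶜ ∈ U := by
        refine Ultrafilter.compl_mem_iff_notMem.2 fun hOU => ?_
        have : E ∩ O ∈ U := U.inter_mem hEU hOU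
        rw [hEO] at this
        exact Filter.empty_notMem (U : Filter ℕ) this
      refine ⟨fun j => φ (2 * j + 1), ?_, ?_⟩
      · intro a b hab
        exact hφmono (show 2 * a + 1 < 2 * b + 1 by omega)
      · exact Filter.mem_of_superset
          (U.inter_mem hXU hOc) (fun i hi => hodd ⟨hi.1, hi.2⟩)
    · have hEc : Eᶜ ∈ U := Ultrafilter.compl_mem_iff_notMem.2 hEU
      refine ⟨fun j => φ (2 * j), ?_, ?_⟩
      · intro a b hab
        exact hφmono (show 2 * a < 2 * b by omega)
      · exact Filter.mem_of_superset
          (U.inter_mem hXU hEc) (fun i hi => heven ⟨hi.1, hi.2⟩)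
end

section
/- If U is a basic ultrafilter on ω (every sequence of elements of U converging to an element of U has a subsequence whose intersection is in U), then U is a p-point. -/
open Set

universe u v w

/-- Every basic ultrafilter is a p-point. -/
theorem basic_is_ppoint (U : Ultrafilter ℕ) (h0 : Nonprincipal U)
    (hb : ∀ A : ℕ → Set ℕ, (∀ n, A n ∈ U) → ∀ L : Set ℕ, L ∈ U → Converges A L →
      ∃ φ : ℕ → ℕ, StrictMono φ ∧ (⋂ k, A (φ k)) ∈ U) :
    IsPPoint U := by
  intro A hA
  set B : ℕ → Set ℕ := fun n => ⋂ i ∈ Finset.range (n + 1), A i with hB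
  have hBU : ∀ n, B n ∈ U := by
    intro n
    exact (Filter.biInter_finset_mem _).2 fun i _ => hA i
  set C : ℕ → Set ℕ := fun n => B n ∪ {i | i < n} with hC
  have hCU : ∀ n, C n ∈ U := fun n => Filter.mem_of_superset (hBU n) subset_union_left
  have hconv : Converges C univ := by
    intro m
    exact ⟨m, fun n hn i hi => by
      simp only [mem_univ, iff_true]
      exact Or.inr (lt_of_lt_of_le hi hn)⟩
  obtain ⟨φ, hφ, hmem⟩ := hb C hCU univ Filter.univ_mem hconv
  refine ⟨⋂ k, C (φ k), hmem, fun n => ?_⟩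
  apply (Set.finite_Iio (φ n)).subset
  intro x hx
  obtain ⟨hx1, hx2⟩ := hx
  have hxC : x ∈ C (φ n) := mem_iInter.1 hx1 n
  rcases hxC with hxB | hlt
  · exfalso
    apply hx2
    have : n ∈ Finset.range (φ n + 1) := Finset.mem_range.2 (Nat.lt_succ_of_le hφ.le_apply)
    exact Set.mem_iInter₂.1 hxB n this
  · exact hlt
end

section
/- If U is a basically generated ultrafilter on ω, then U is strictly Tukey below ([𝔠]^{<ω}, ⊆): there is no unbounded map from ([𝔠]^{<ω}, ⊆) into (U, ⊇); equivalently, every subset of U of size continuum contains an infinite subfamily whose intersection lies in U. -/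
open Set

universe u v w

def BasicallyGenerated (U : Ultrafilter ℕ) : Prop :=
  ∃ B : Set (Set ℕ), (∀ b ∈ B, b ∈ U) ∧ (∀ A : Set ℕ, A ∈ U → ∃ b ∈ B, b ⊆ A) ∧
    ∀ A : ℕ → Set ℕ, (∀ n, A n ∈ B) → ∀ L ∈ B, Converges A L →
      ∃ φ : ℕ → ℕ, StrictMono φ ∧ (⋂ k, A (φ k)) ∈ U


/-! Fix a base `B` witnessing basic generation and shrink each member of an uncountable family
into `B`. Either infinitely many members shrink to the same element of `B`, which then lies below
their intersection, or the shrunken family is an uncountable subset of `B`. An uncountable subset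
of the Cantor space `𝒫(ℕ)` has only countably many isolated points, so it contains a sequence of
other members converging to one of its members; basic generation yields a subsequence whose
intersection lies in `U`, and that subsequence takes infinitely many values.

For the Tukey statement, apply this to the family `a ↦ g {a}` indexed by all of `𝒫(ℕ)`: the
singletons of infinitely many points are unbounded in `[𝔠]^{<ω}`, so the intersection of their
images cannot lie in `U`. -/

open Cardinal in
theorem Set.not_countable_of_mk_eq_continuum {α : Type u} {s : Set α} (hs : #s = 𝔠) :
    ¬ s.Countable := by
  rw [← le_aleph0_iff_set_countable, hs, not_le]
  exact aleph0_lt_continuum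

theorem Set.Countable.of_countable_fibers {α : Type u} {β : Type v} (f : α → β) {s : Set α}
    (himage : (f '' s).Countable) (hfibers : ∀ y ∈ f '' s, (s ∩ f ⁻¹' {y}).Countable) :
    s.Countable :=
  (himage.biUnion hfibers).mono fun x hx ↦
    mem_biUnion (mem_image_of_mem f hx) (⟨hx, rfl⟩ : x ∈ s ∩ f ⁻¹' {f x})

theorem Set.finite_setOf_isolated_below (S : Set (Set ℕ)) (n : ℕ) :
    {L ∈ S | ∀ A ∈ S, A ∩ Iio n = L ∩ Iio n → A = L}.Finite := by
  refine Finite.of_finite_image (f := (· ∩ Iio n)) ((finite_Iio n).powerset.subset ?_) ?_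
  · rintro _ ⟨L, -, rfl⟩
    exact inter_subset_right
  · rintro L ⟨-, hL⟩ A ⟨hA, -⟩ hAL
    exact (hL A hA hAL.symm).symm

theorem Set.exists_converges_of_not_countable {S : Set (Set ℕ)} (hS : ¬ S.Countable) :
    ∃ L ∈ S, ∃ A : ℕ → Set ℕ, (∀ n, A n ∈ S ∧ A n ≠ L) ∧ Converges A L := by
  obtain ⟨L, hLS, hL⟩ : ∃ L ∈ S, ∀ n, ∃ A ∈ S, A ∩ Iio n = L ∩ Iio n ∧ A ≠ L := by
    by_contra! hisolated
    refine hS ((countable_iUnion fun n ↦ (finite_setOf_isolated_below S n).countable).mono ?_)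
    intro L hLS
    obtain ⟨n, hn⟩ := hisolated L hLS
    exact mem_iUnion.2 ⟨n, hLS, hn⟩
  choose A hAS hAL hAne using hL
  refine ⟨L, hLS, A, fun n ↦ ⟨hAS n, hAne n⟩, fun m ↦ ⟨m, fun n hn i hi ↦ ?_⟩⟩
  have hi' : i ∈ Iio n := lt_of_lt_of_le hi hn
  simpa [hi'] using congrArg (i ∈ ·) (hAL n)

theorem Converges.comp_strictMono {A : ℕ → Set ℕ} {L : Set ℕ} (hA : Converges A L)
    {φ : ℕ → ℕ} (hφ : StrictMono φ) : Converges (A ∘ φ) L := by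
  intro m
  obtain ⟨k, hk⟩ := hA m
  exact ⟨k, fun n hn ↦ hk (φ n) (hn.trans hφ.le_apply)⟩

theorem Converges.infinite_range {A : ℕ → Set ℕ} {L : Set ℕ} (hA : Converges A L)
    (hne : ∀ n, A n ≠ L) : (range A).Infinite := by
  intro hfin
  have hsep : ∀ᶠ m in Filter.atTop, ∀ v ∈ range A, ∃ i < m, ¬ (i ∈ v ↔ i ∈ L) := by
    refine hfin.eventually_all.2 ?_
    rintro _ ⟨n, rfl⟩
    obtain ⟨i, hi⟩ := not_forall.1 (mt Set.ext (hne n))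
    exact (Filter.eventually_gt_atTop i).mono fun m hm ↦ ⟨i, hm, hi⟩
  obtain ⟨m, hm⟩ := hsep.exists
  obtain ⟨k, hk⟩ := hA m
  obtain ⟨i, hi, hdiff⟩ := hm (A k) (mem_range_self k)
  exact hdiff (hk k le_rfl i hi)

theorem exists_infinite_sInter_mem_of_not_countable {U : Ultrafilter ℕ} {B : Set (Set ℕ)}
    (hB : ∀ A : ℕ → Set ℕ, (∀ n, A n ∈ B) → ∀ L ∈ B, Converges A L →
      ∃ φ : ℕ → ℕ, StrictMono φ ∧ (⋂ k, A (φ k)) ∈ U)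
    {S : Set (Set ℕ)} (hSB : S ⊆ B) (hS : ¬ S.Countable) :
    ∃ Y ⊆ S, Y.Infinite ∧ ⋂₀ Y ∈ U := by
  obtain ⟨L, hLS, A, hA, hAL⟩ := exists_converges_of_not_countable hS
  obtain ⟨φ, hφ, hφU⟩ := hB A (fun n ↦ hSB (hA n).1) L (hSB hLS) hAL
  refine ⟨range (A ∘ φ), range_subset_iff.2 fun k ↦ (hA (φ k)).1, ?_, ?_⟩
  · exact (hAL.comp_strictMono hφ).infinite_range fun k ↦ (hA (φ k)).2
  · rwa [sInter_range]

theorem BasicallyGenerated.exists_infinite_biInter_mem {U : Ultrafilter ℕ}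
    (hU : BasicallyGenerated U) {ι : Type u} {F : ι → Set ℕ} {I : Set ι} (hI : ¬ I.Countable)
    (hF : ∀ i ∈ I, F i ∈ U) : ∃ J ⊆ I, J.Infinite ∧ ⋂ i ∈ J, F i ∈ U := by
  obtain ⟨B, hBU, hBcof, hB⟩ := hU
  choose! base hbaseB hbase_sub using hBcof
  set G := base ∘ F
  have hGB : ∀ i ∈ I, G i ∈ B := fun i hi ↦ hbaseB _ (hF i hi)
  have hGF : ∀ J ⊆ I, ⋂ i ∈ J, G i ⊆ ⋂ i ∈ J, F i :=
    fun J hJ ↦ biInter_mono subset_rfl fun i hi ↦ hbase_sub _ (hF i (hJ hi))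
  by_cases hfiber : ∃ v ∈ G '' I, (I ∩ G ⁻¹' {v}).Infinite
  · obtain ⟨_, ⟨i₀, hi₀, rfl⟩, hinf⟩ := hfiber
    refine ⟨_, inter_subset_left, hinf, Filter.mem_of_superset (hBU _ (hGB i₀ hi₀)) ?_⟩
    refine Subset.trans ?_ (hGF _ inter_subset_left)
    exact subset_iInter₂ fun i hi ↦ hi.2.ge
  · push Not at hfiber
    have himage : ¬ (G '' I).Countable := fun h ↦
      hI (h.of_countable_fibers G fun v hv ↦ (hfiber v hv).countable)
    obtain ⟨Y, hYI, hY, hYU⟩ := exists_infinite_sInter_mem_of_not_countable hB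
      (image_subset_iff.2 hGB) himage
    obtain ⟨J, hJI, rfl⟩ := subset_image_iff.1 hYI
    refine ⟨J, hJI, hY.of_image G, Filter.mem_of_superset hYU ?_⟩
    rw [sInter_image]
    exact hGF J hJI

theorem UnboundedMap.biInter_singleton_notMem {α : Type u} {V : Type v} {U : Ultrafilter V}
    {g : Finset α → UltOrd U} (hg : UnboundedMap g) {I : Set α} (hI : I.Infinite) :
    ⋂ a ∈ I, (g {a}).1 ∉ U := by
  intro hmem
  have hsingletons : UnboundedSet ((fun a ↦ ({a} : Finset α)) '' I) := by
    intro F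
    obtain ⟨a, haI, haF⟩ := hI.exists_notMem_finset F
    exact ⟨{a}, mem_image_of_mem _ haI, fun hle ↦ haF (hle (Finset.mem_singleton_self a))⟩
  obtain ⟨_, ⟨_, ⟨a, haI, rfl⟩, rfl⟩, hnot⟩ := hg _ hsingletons ⟨_, hmem⟩
  exact hnot (biInter_subset_of_mem haI)

/-- A basically generated ultrafilter is strictly Tukey below `[𝔠]^{<ω}`. -/
theorem basicallyGenerated_below_top (U : Ultrafilter ℕ) (h : BasicallyGenerated U) :
    (¬ ∃ g : Finset (Set ℕ) → UltOrd U, UnboundedMap g) ∧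
    ∀ X : Set (Set ℕ), (∀ A ∈ X, A ∈ U) → Cardinal.mk ↥X = Cardinal.continuum →
      ∃ Y ⊆ X, Y.Infinite ∧ ⋂₀ Y ∈ U := by
  refine ⟨?_, fun X hXU hX ↦ ?_⟩
  · rintro ⟨g, hg⟩
    have huniv : ¬ (univ : Set (Set ℕ)).Countable :=
      not_countable_of_mk_eq_continuum (Cardinal.mk_univ.trans Cardinal.mk_set_nat)
    obtain ⟨J, -, hJ, hJU⟩ :=
      h.exists_infinite_biInter_mem (F := fun a ↦ (g {a}).1) huniv fun a _ ↦ (g {a}).2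
    exact hg.biInter_singleton_notMem hJ hJU
  · obtain ⟨Y, hYX, hY, hYU⟩ :=
      h.exists_infinite_biInter_mem (F := id) (not_countable_of_mk_eq_continuum hX) hXU
    exact ⟨Y, hYX, hY, by rwa [sInter_eq_biInter]⟩
end

section
/- A nonprincipal ultrafilter U on FIN generated by sets of the form [X] for block sequences X is not a p-point, i.e., there is a countable family {Uₙ : n < ω} ⊆ U with no U ∈ U satisfying U ⊆* Uₙ for all n. -/
open Set

universe u v w

/-- `FIN` is the set of nonempty finite subsets of `ω`. -/
abbrev FIN : Type := {s : Finset ℕ // s.Nonempty}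

def IsBlockSeq (X : ℕ → FIN) : Prop :=
  ∀ n, (X n).1.max' (X n).2 < (X (n + 1)).1.min' (X (n + 1)).2

/-- `[X]`: the set of finite unions of elements of the block sequence `X`. -/
def FU (X : ℕ → FIN) : Set FIN :=
  {y | ∃ F : Finset ℕ, F.Nonempty ∧ y.1 = F.biUnion fun n => (X n).1}

def BlockGenerated (U : Ultrafilter FIN) : Prop :=
  ∀ A : Set FIN, A ∈ U → ∃ X : ℕ → FIN, IsBlockSeq X ∧ FU X ∈ U ∧ FU X ⊆ A

lemma blockSeq_max'_strictMono (X : ℕ → FIN) (hX : IsBlockSeq X) :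
    StrictMono fun k => (X k).1.max' (X k).2 := by
  apply strictMono_nat_of_lt_succ
  intro k
  exact lt_of_lt_of_le (hX k) (Finset.min'_le _ _ (Finset.max'_mem _ _))

lemma blockSeq_le_min' (X : ℕ → FIN) (hX : IsBlockSeq X) (n : ℕ) :
    n ≤ (X n).1.min' (X n).2 := by
  induction n with
  | zero => exact Nat.zero_le _
  | succ k ih =>
    have h1 : (X k).1.min' (X k).2 ≤ (X k).1.max' (X k).2 :=
      Finset.min'_le _ _ (Finset.max'_mem _ _)
    have := hX k
    omega

/-- A nonprincipal block-generated ultrafilter on `FIN` is not a p-point. -/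
theorem blockGenerated_not_ppoint (U : Ultrafilter FIN) (h0 : Nonprincipal U)
    (hb : BlockGenerated U) :
    ∃ A : ℕ → Set FIN, (∀ n, A n ∈ U) ∧
      ¬ ∃ B : Set FIN, B ∈ U ∧ ∀ n, (B \ A n).Finite := by
  classical
  refine ⟨fun n => {y : FIN | n ≤ y.1.min' y.2}, ?_, ?_⟩
  · intro n
    by_contra hn
    rw [← Ultrafilter.compl_mem_iff_notMem] at hn
    obtain ⟨X, hX, hFU, hsub⟩ := hb _ hn
    have hXn : X n ∈ FU X := ⟨{n}, Finset.singleton_nonempty n,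
      (Finset.singleton_biUnion).symm⟩
    have := hsub hXn
    exact this (blockSeq_le_min' X hX n)
  · rintro ⟨B, hB, hfin⟩
    obtain ⟨X, hX, hFU, hsub⟩ := hb B hB
    set n := (X 0).1.min' (X 0).2 + 1 with hn
    have hmax := blockSeq_max'_strictMono X hX
    set f : ℕ → FIN := fun k =>
      ⟨(X 0).1 ∪ (X (k + 1)).1, Finset.Nonempty.mono Finset.subset_union_left (X 0).2⟩ with hf
    have hmem : ∀ k, f k ∈ B \ {y : FIN | n ≤ y.1.min' y.2} := by
      intro k
      constructor
      · apply hsub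
        refine ⟨{0, k + 1}, ⟨0, by simp⟩, ?_⟩
        simp [hf, Finset.biUnion_insert, Finset.singleton_biUnion]
      · simp only [Set.mem_setOf_eq, hn, not_le, Nat.lt_succ_iff]
        exact Finset.min'_le _ _ (Finset.mem_union_left _ (Finset.min'_mem _ _))
    have hmaxf : ∀ k, (f k).1.max' (f k).2 = (X (k + 1)).1.max' (X (k + 1)).2 := by
      intro k
      apply le_antisymm
      · apply Finset.max'_le
        intro a ha
        rcases Finset.mem_union.1 ha with h | h
        · exact le_of_lt (lt_of_le_of_lt (Finset.le_max' _ _ h)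
            (hmax (Nat.succ_pos k)))
        · exact Finset.le_max' _ _ h
      · exact Finset.le_max' _ _ (Finset.mem_union_right _ (Finset.max'_mem _ _))
    have hinj : Function.Injective f := by
      intro k j hkj
      have : (X (k + 1)).1.max' (X (k + 1)).2 = (X (j + 1)).1.max' (X (j + 1)).2 := by
        rw [← hmaxf k, ← hmaxf j, hkj]
      have := hmax.injective this
      omega
    exact Set.infinite_of_injective_forall_mem hinj hmem (hfin n)
end
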